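/- Let $c, k, L>0$ with state feedback transport semigroup $(\mathcal{T}^\varphi_L(t)x^0)(\omega) = e^{-\frac{k}{c}E_L(\omega,t)} P_L(x^0)(\omega-ct)$, where $E_L(\omega,t) = \int_{\omega-ct}^\omega P_L(\chi_{[a,b]})(y)\,dy$ for $0<a<b<L$ and $P_L$ the $L$-periodization. Then $\|\mathcal{T}^\varphi_L(t)x^0\|_{L^2([0,L])}^2 \le e^{-\frac{2k}{c}\lfloor ct/L\rfloor (b-a)}\|x^0\|_{L^2([0,L])}^2$ for all $t\ge 0$ and $x^0\in L^2([0,L])$. -/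

import Mathlib

open MeasureTheory

/-- The `L`-periodization operator. -/
noncomputable def periodize (L : ℝ) (x : ℝ → ℝ) : ℝ → ℝ :=
  fun ω => x (ω - L * ((⌈ω / L⌉ : ℝ) - 1))

lemma periodize_periodic (L : ℝ) (f : ℝ → ℝ) :
    Function.Periodic (periodize L f) L := by
  intro ω
  unfold periodize
  by_cases hL : L = 0
  · simp [hL]
  have h1 : (ω + L) / L = ω / L + 1 := by field_simp
  rw [h1, Int.ceil_add_one]
  congr 1
  push_cast
  ring

lemma periodize_eq_on (L : ℝ) (hL : 0 < L) (f : ℝ → ℝ) {ω : ℝ} (hω : ω ∈ Set.Ioc 0 L) :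
    periodize L f ω = f ω := by
  have h1 : ⌈ω / L⌉ = 1 := by
    rw [Int.ceil_eq_iff]
    refine ⟨by push_cast; simpa using div_pos hω.1 hL, ?_⟩
    push_cast
    exact (div_le_one hL).2 hω.2
  unfold periodize
  rw [h1]
  norm_num

lemma periodize_measurable (L : ℝ) {f : ℝ → ℝ} (hf : Measurable f) :
    Measurable (periodize L f) := by
  apply hf.comp
  have h1 : Measurable fun ω : ℝ => ((⌈ω / L⌉ : ℤ) : ℝ) :=
    measurable_from_top.comp (measurable_id.div_const L).ceil
  exact measurable_id.sub (measurable_const.mul (h1.sub measurable_const))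

lemma periodic_intervalIntegrable_all {f : ℝ → ℝ} {T : ℝ} (hT : 0 < T)
    (hf : Function.Periodic f T) {s : ℝ} (h : IntervalIntegrable f volume s (s + T)) :
    ∀ a b, IntervalIntegrable f volume a b := by
  have step1 : ∀ n : ℤ, IntervalIntegrable f volume (s + n * T) (s + n * T + T) := by
    intro n
    have h2 := h.comp_sub_right (n * T)
    have h3 : (fun x => f (x - n * T)) = f := funext fun x => hf.sub_int_mul_eq n
    rw [h3] at h2
    have e : s + T + n * T = s + n * T + T := by ring
    rwa [e] at h2
  have step2 : ∀ (m : ℤ) (n : ℕ),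
      IntervalIntegrable f volume (s + m * T) (s + (m + n : ℤ) * T) := by
    intro m n
    induction n with
    | zero => simpa using IntervalIntegrable.refl
    | succ n ih =>
      refine ih.trans ?_
      have h2 := step1 (m + n)
      have e1 : s + ((m + n : ℤ) : ℝ) * T + T = s + ((m + (n + 1 : ℕ) : ℤ) : ℝ) * T := by
        push_cast; ring
      rwa [e1] at h2
  intro a b
  set m : ℤ := ⌊(min a b - s) / T⌋ with hm
  obtain ⟨n, hn⟩ := exists_nat_ge ((max a b - s - m * T) / T)
  refine (step2 m n).mono_set ?_
  have h1 : s + m * T ≤ min a b := by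
    have := (le_div_iff₀ hT).mp (Int.floor_le ((min a b - s) / T))
    rw [← hm] at this
    linarith
  have h2 : max a b ≤ s + ((m + n : ℤ) : ℝ) * T := by
    have := (div_le_iff₀ hT).mp hn
    push_cast
    linarith
  have hle : s + m * T ≤ s + ((m + n : ℤ) : ℝ) * T := le_trans (h1.trans min_le_max) h2
  rw [Set.uIcc_of_le hle]
  intro y hy
  exact ⟨le_trans h1 hy.1, le_trans hy.2 h2⟩

/-- Local damping on a single interval `[a,b] ⊂ [0,L]`: the closed-loop transport
semigroup satisfies `‖𝒯^φ_L(t)x⁰‖² ≤ e^{-(2k/c)⌊ct/L⌋(b-a)} ‖x⁰‖²`. -/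
theorem stmt_16 (c k L a b : ℝ) (hc : 0 < c) (hk : 0 < k) (hL : 0 < L)
    (ha : 0 < a) (hab : a < b) (hbL : b < L)
    (t : ℝ) (ht : 0 ≤ t) (x : ℝ → ℝ) (hx : Measurable x) :
    (∫ ω in (0:ℝ)..L,
        (Real.exp (-(k / c) * ∫ y in (ω - c * t)..ω,
            periodize L (Set.indicator (Set.Icc a b) fun _ => (1:ℝ)) y) *
          periodize L x (ω - c * t)) ^ 2) ≤
      Real.exp (-(2 * k / c) * (↑⌊c * t / L⌋ : ℝ) * (b - a)) *
        ∫ ω in (0:ℝ)..L, (x ω) ^ 2 := by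
  set χP : ℝ → ℝ := periodize L (Set.indicator (Set.Icc a b) fun _ => (1:ℝ)) with hχPdef
  have hχ01 : ∀ z, 0 ≤ Set.indicator (Set.Icc a b) (fun _ => (1:ℝ)) z ∧
      Set.indicator (Set.Icc a b) (fun _ => (1:ℝ)) z ≤ 1 := by
    intro z
    unfold Set.indicator
    split <;> norm_num
  have hχP0 : ∀ y, 0 ≤ χP y := fun y => (hχ01 _).1
  have hχP1 : ∀ y, χP y ≤ 1 := fun y => (hχ01 _).2
  have hχPmeas : Measurable χP :=
    periodize_measurable L (measurable_const.indicator measurableSet_Icc)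
  have hχPper : Function.Periodic χP L := periodize_periodic L _
  have hχPint : ∀ u v : ℝ, IntervalIntegrable χP volume u v := by
    intro u v
    rw [intervalIntegrable_iff]
    haveI : IsFiniteMeasure (volume.restrict (Set.uIoc u v)) :=
      ⟨by rw [Measure.restrict_apply_univ]; exact measure_Ioc_lt_top⟩
    apply Integrable.mono' (integrable_const 1)
    · exact hχPmeas.aestronglyMeasurable
    · filter_upwards with y
      rw [Real.norm_eq_abs, abs_of_nonneg (hχP0 y)]
      exact hχP1 y
  have hval : (∫ y in (0:ℝ)..L, χP y) = b - a := by
    have h1 : ∫ y in (0:ℝ)..L, χP y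
        = ∫ y in (0:ℝ)..L, Set.indicator (Set.Icc a b) (fun _ => (1:ℝ)) y := by
      apply intervalIntegral.integral_congr_ae
      filter_upwards with y hy
      rw [Set.uIoc_of_le hL.le] at hy
      exact periodize_eq_on L hL _ hy
    rw [h1, intervalIntegral.integral_of_le hL.le,
      MeasureTheory.integral_indicator measurableSet_Icc,
      Measure.restrict_restrict measurableSet_Icc]
    have h2 : Set.Icc a b ∩ Set.Ioc 0 L = Set.Icc a b := by
      apply Set.inter_eq_left.2
      intro y hy
      exact ⟨lt_of_lt_of_le ha hy.1, le_trans hy.2 (le_of_lt hbL)⟩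
    rw [h2, setIntegral_const, Real.volume_real_Icc_of_le hab.le, smul_eq_mul, mul_one]
  set n : ℤ := ⌊c * t / L⌋ with hn
  have hn0 : (0:ℝ) ≤ (n:ℝ) := by
    have : (0:ℤ) ≤ n := Int.floor_nonneg.2 (by positivity)
    exact_mod_cast this
  have hnL : (n:ℝ) * L ≤ c * t := by
    have := (le_div_iff₀ hL).mp (Int.floor_le (c * t / L))
    linarith
  set E : ℝ → ℝ := fun ω => ∫ y in (ω - c * t)..ω, χP y with hEdef
  have hEcont : Continuous E := by
    have hF := intervalIntegral.continuous_primitive hχPint 0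
    have hE2 : E = fun ω => (∫ y in (0:ℝ)..ω, χP y) - ∫ y in (0:ℝ)..(ω - c * t), χP y := by
      funext ω
      rw [hEdef, eq_sub_iff_add_eq']
      exact intervalIntegral.integral_add_adjacent_intervals (hχPint _ _) (hχPint _ _)
    rw [hE2]
    exact hF.sub (hF.comp (continuous_id.sub continuous_const))
  have hsub : ∀ ω : ℝ, ω - c * t ≤ ω := fun ω => by nlinarith
  have hE0 : ∀ ω, 0 ≤ E ω := fun ω =>
    intervalIntegral.integral_nonneg (hsub ω) (fun y _ => hχP0 y)
  have hEub : ∀ ω, E ω ≤ c * t := by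
    intro ω
    have h := intervalIntegral.norm_integral_le_of_norm_le_const
      (C := 1) (a := ω - c * t) (b := ω) (f := χP)
      (fun y _ => by rw [Real.norm_eq_abs, abs_of_nonneg (hχP0 y)]; exact hχP1 y)
    calc E ω ≤ |E ω| := le_abs_self _
      _ ≤ 1 * |ω - (ω - c * t)| := h
      _ = c * t := by
          rw [show ω - (ω - c * t) = c * t by ring, abs_of_nonneg (by positivity)]
          ring
  have hElb : ∀ ω, (n:ℝ) * (b - a) ≤ E ω := by
    intro ω
    set s := ω - c * t with hs
    have h1 : ∫ y in s..(s + n • L), χP y = n • ∫ y in (0:ℝ)..L, χP y := by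
      rw [hχPper.intervalIntegral_add_zsmul_eq n s hχPint,
        hχPper.intervalIntegral_add_eq s 0, zero_add]
    have h2 : E ω = (∫ y in s..(s + n • L), χP y) + ∫ y in (s + n • L)..ω, χP y :=
      (intervalIntegral.integral_add_adjacent_intervals (hχPint _ _) (hχPint _ _)).symm
    have h3 : 0 ≤ ∫ y in (s + n • L)..ω, χP y := by
      apply intervalIntegral.integral_nonneg _ (fun y _ => hχP0 y)
      rw [zsmul_eq_mul, hs]
      linarith
    rw [h2, h1, hval, zsmul_eq_mul]
    linarith
  set v : ℝ → ℝ := fun ω => periodize L x (ω - c * t) with hvdef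
  have hgeq : ∀ ω : ℝ,
      (Real.exp (-(k / c) * ∫ y in (ω - c * t)..ω, χP y) * periodize L x (ω - c * t)) ^ 2
        = Real.exp (-(2 * k / c) * E ω) * (v ω) ^ 2 := by
    intro ω
    have he : (-(k / c) * E ω) + (-(k / c) * E ω) = -(2 * k / c) * E ω := by ring
    rw [mul_pow, sq (Real.exp _), ← Real.exp_add, he, hEdef, hvdef]
  simp only [hgeq]
  set w : ℝ → ℝ := fun y => (periodize L x y) ^ 2 with hwdef
  have hw_per : Function.Periodic w L := (periodize_periodic L x).comp (· ^ 2)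
  have hwEq : Set.EqOn w (fun y => x y ^ 2) (Set.Ioc 0 L) := fun y hy => by
    rw [hwdef]
    simp only
    rw [periodize_eq_on L hL x hy]
  have hexpc : Continuous fun ω => Real.exp (-(2 * k / c) * E ω) :=
    Real.continuous_exp.comp (continuous_const.mul hEcont)
  have hexpc2 : Continuous fun ω => Real.exp ((2 * k / c) * E ω) :=
    Real.continuous_exp.comp (continuous_const.mul hEcont)
  by_cases hI : IntervalIntegrable (fun ω => x ω ^ 2) volume 0 L
  · -- integrable case
    have hw0L : IntervalIntegrable w volume 0 L := by
      rw [intervalIntegrable_iff_integrableOn_Ioc_of_le hL.le] at hI ⊢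
      exact hI.congr_fun (fun y hy => (hwEq hy).symm) measurableSet_Ioc
    have hwall : ∀ u v : ℝ, IntervalIntegrable w volume u v :=
      periodic_intervalIntegrable_all hL hw_per (s := 0) (by rw [zero_add]; exact hw0L)
    have hv2int : IntervalIntegrable (fun ω => v ω ^ 2) volume 0 L := by
      have h2 := (hwall (0 - c * t) (L - c * t)).comp_sub_right (c * t)
      have e1 : (fun y => w (y - c * t)) = fun ω => v ω ^ 2 := by
        funext y; rw [hwdef, hvdef]
      rw [e1] at h2
      have e2 : 0 - c * t + c * t = 0 := by ring
      have e3 : L - c * t + c * t = L := by ring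
      rwa [e2, e3] at h2
    have hv2val : ∫ ω in (0:ℝ)..L, v ω ^ 2 = ∫ ω in (0:ℝ)..L, x ω ^ 2 := by
      have h1 : (∫ ω in (0:ℝ)..L, w (ω - c * t)) = ∫ y in (0 - c * t)..(L - c * t), w y :=
        intervalIntegral.integral_comp_sub_right w (c * t)
      have h2 : ∫ y in (0 - c * t)..(L - c * t), w y = ∫ y in (0:ℝ)..L, w y := by
        have := hw_per.intervalIntegral_add_eq (0 - c * t) 0
        rw [zero_add] at this
        rw [show L - c * t = 0 - c * t + L by ring]
        exact this
      have h3 : ∫ y in (0:ℝ)..L, w y = ∫ y in (0:ℝ)..L, x y ^ 2 := by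
        apply intervalIntegral.integral_congr_ae
        filter_upwards with y hy
        rw [Set.uIoc_of_le hL.le] at hy
        exact hwEq hy
      calc ∫ ω in (0:ℝ)..L, v ω ^ 2 = ∫ ω in (0:ℝ)..L, w (ω - c * t) := by
            apply intervalIntegral.integral_congr
            intro ω _
            rw [hwdef, hvdef]
        _ = ∫ y in (0:ℝ)..L, x y ^ 2 := by rw [h1, h2, h3]
    have hdint : IntervalIntegrable (fun ω => Real.exp (-(2 * k / c) * E ω) * v ω ^ 2)
        volume 0 L := by
      rw [intervalIntegrable_iff] at hv2int ⊢
      apply hv2int.bdd_mul (c := 1) hexpc.aestronglyMeasurable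
      refine Filter.Eventually.of_forall (fun ω => ?_)
      rw [Real.norm_eq_abs, abs_of_nonneg (Real.exp_pos _).le]
      rw [Real.exp_le_one_iff]
      have : 0 ≤ 2 * k / c * E ω := mul_nonneg (by positivity) (hE0 ω)
      linarith
    calc (∫ ω in (0:ℝ)..L, Real.exp (-(2 * k / c) * E ω) * v ω ^ 2)
        ≤ ∫ ω in (0:ℝ)..L, Real.exp (-(2 * k / c) * (n:ℝ) * (b - a)) * v ω ^ 2 := by
          apply intervalIntegral.integral_mono_on hL.le hdint (hv2int.const_mul _)
          intro ω _
          apply mul_le_mul_of_nonneg_right _ (sq_nonneg _)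
          apply Real.exp_le_exp.2
          have h2kc : (0:ℝ) < 2 * k / c := by positivity
          have := hElb ω
          nlinarith
      _ = Real.exp (-(2 * k / c) * (n:ℝ) * (b - a)) * ∫ ω in (0:ℝ)..L, v ω ^ 2 :=
          intervalIntegral.integral_const_mul _ _
      _ = Real.exp (-(2 * k / c) * (n:ℝ) * (b - a)) * ∫ ω in (0:ℝ)..L, x ω ^ 2 := by
          rw [hv2val]
  · -- non-integrable case: both sides vanish
    rw [intervalIntegral.integral_undef hI, mul_zero]
    have hnint : ¬ IntervalIntegrable (fun ω => Real.exp (-(2 * k / c) * E ω) * v ω ^ 2)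
        volume 0 L := by
      intro hcon
      apply hI
      have hv2 : IntervalIntegrable (fun ω => v ω ^ 2) volume 0 L := by
        have heq2 : (fun ω => v ω ^ 2)
            = fun ω => Real.exp ((2 * k / c) * E ω) *
                (Real.exp (-(2 * k / c) * E ω) * v ω ^ 2) := by
          funext ω
          rw [← mul_assoc, ← Real.exp_add, show (2 * k / c) * E ω + -(2 * k / c) * E ω = 0
            by ring, Real.exp_zero, one_mul]
        rw [heq2, intervalIntegrable_iff]
        rw [intervalIntegrable_iff] at hcon
        apply hcon.bdd_mul (c := Real.exp (2 * k * t)) hexpc2.aestronglyMeasurable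
        refine Filter.Eventually.of_forall (fun ω => ?_)
        rw [Real.norm_eq_abs, abs_of_nonneg (Real.exp_pos _).le]
        apply Real.exp_le_exp.2
        have h1 : 2 * k / c * E ω ≤ 2 * k / c * (c * t) :=
          mul_le_mul_of_nonneg_left (hEub ω) (by positivity)
        have h2 : 2 * k / c * (c * t) = 2 * k * t := by field_simp
        linarith
      have hwint : IntervalIntegrable w volume (0 - c * t) (L - c * t) := by
        have h2 := hv2.comp_sub_right (-(c * t))
        have e1 : (fun y => (fun ω => v ω ^ 2) (y - -(c * t))) = w := by
          funext y
          rw [hvdef, hwdef]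
          simp only
          congr 2
          ring
        rw [e1] at h2
        have e2 : (0:ℝ) + -(c * t) = 0 - c * t := by ring
        have e3 : L + -(c * t) = L - c * t := by ring
        rwa [e2, e3] at h2
      have hwall : ∀ u v : ℝ, IntervalIntegrable w volume u v := by
        apply periodic_intervalIntegrable_all hL hw_per (s := 0 - c * t)
        rw [show 0 - c * t + L = L - c * t by ring]
        exact hwint
      have h0L := hwall 0 L
      rw [intervalIntegrable_iff_integrableOn_Ioc_of_le hL.le] at h0L ⊢
      exact h0L.congr_fun hwEq measurableSet_Ioc
    rw [intervalIntegral.integral_undef hnint]
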